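/- arXiv:1305.0348 — 2 statements merged into one kernel-verified Lean document; each statement's English description precedes it below -/
import Mathlib

section
/- Let $\alpha$ be irrational, $M$ a large positive integer, and let $s_1 \in [1,M]$ be the unique integer with $\|s_1\alpha\| = \min_{1 \leq s \leq M}\|s\alpha\|$. Then for any $c > 0$ and $M$ sufficiently large, every integer $b \in [1,M]$ with $\|b\alpha\| \leq M^{-(1+c)}$ is divisible by $s_1$. -/
/-- Distance from a real number to the nearest integer. -/
noncomputable def nearestIntDist (x : ℝ) : ℝ := |x - round x|

/-! With `p = round (s₁ α)` and `P = round (b α)`, the integer `b p - s₁ P = s₁ (b α - P) - b (s₁ α - p)`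
has absolute value at most `2 M · M^{-(1+c)} < 1`, hence `b p = s₁ P`. A common factor `g > 1` of `s₁`
and `p` would make `s₁ / g` an approximant with `‖(s₁ / g) α‖ ≤ ‖s₁ α‖ / g`, contradicting the
minimality of `s₁`; so `s₁` is coprime to `p` and divides `b`. -/

open Filter Topology

lemma nearestIntDist_le (x : ℝ) (n : ℤ) : nearestIntDist x ≤ |x - n| :=
  round_le x n

lemma nearestIntDist_nonneg (x : ℝ) : 0 ≤ nearestIntDist x :=
  abs_nonneg _

lemma mul_nearestIntDist_le_of_dvd_round {n : ℕ} {x : ℝ} (hn : (n : ℤ) ∣ round (n * x)) :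
    n * nearestIntDist x ≤ nearestIntDist (n * x) := by
  obtain ⟨q, hq⟩ := hn
  calc (n : ℝ) * nearestIntDist x ≤ n * |x - q| := by gcongr; exact nearestIntDist_le x q
    _ = nearestIntDist (n * x) := by
      rw [nearestIntDist, hq]; push_cast; rw [← mul_sub, abs_mul, Nat.abs_cast]

lemma natCast_mul_round_eq_of_lt_one {α : ℝ} {a b : ℕ}
    (h : a * nearestIntDist (b * α) + b * nearestIntDist (a * α) < 1) :
    (b : ℤ) * round (a * α) = a * round (b * α) := by
  rw [← sub_eq_zero, ← Int.abs_lt_one_iff]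
  have : |((b * round (a * α) - a * round (b * α) : ℤ) : ℝ)| < 1 := by
    calc |((b * round (a * α) - a * round (b * α) : ℤ) : ℝ)|
        = |a * (b * α - round (b * α)) - b * (a * α - round (a * α))| := by push_cast; ring_nf
      _ ≤ a * nearestIntDist (b * α) + b * nearestIntDist (a * α) := by
        refine (abs_sub _ _).trans ?_
        simp only [abs_mul, Nat.abs_cast, nearestIntDist, le_refl]
      _ < 1 := h
  exact_mod_cast this

lemma coprime_round_of_forall_lt {α : ℝ} {s : ℕ} (hs : 1 ≤ s)
    (hbest : ∀ t, 1 ≤ t → t < s → nearestIntDist (s * α) < nearestIntDist (t * α)) :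
    IsCoprime (s : ℤ) (round (s * α)) := by
  rw [Int.isCoprime_iff_gcd_eq_one]
  by_contra hgcd
  set g := Int.gcd s (round (s * α))
  obtain ⟨t, hst⟩ : g ∣ s := Int.natCast_dvd_natCast.mp (Int.gcd_dvd_left _ _)
  have ht : 1 ≤ t := Nat.pos_of_ne_zero (right_ne_zero_of_mul (by omega : g * t ≠ 0))
  have hg : 2 ≤ g := by
    have := Nat.pos_of_ne_zero (left_ne_zero_of_mul (by omega : g * t ≠ 0)); omega
  have hsα : (s : ℝ) * α = g * (t * α) := by rw [hst]; push_cast; ring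
  have hdvd : (g : ℤ) ∣ round (g * (t * α)) := hsα ▸ Int.gcd_dvd_right _ _
  have hg_one : (1 : ℝ) ≤ g := by exact_mod_cast hg.trans' one_le_two
  have hts : t < s := by rw [hst]; nlinarith
  refine lt_irrefl (nearestIntDist (t * α)) ?_
  calc nearestIntDist (t * α) ≤ g * nearestIntDist (t * α) :=
        le_mul_of_one_le_left (nearestIntDist_nonneg _) hg_one
    _ ≤ nearestIntDist (g * (t * α)) := mul_nearestIntDist_le_of_dvd_round hdvd
    _ = nearestIntDist (s * α) := by rw [hsα]
    _ < nearestIntDist (t * α) := hbest t ht hts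

lemma eventually_two_mul_natCast_mul_rpow_lt_one {c : ℝ} (hc : 0 < c) :
    ∀ᶠ M : ℕ in atTop, 2 * (M * (M : ℝ) ^ (-(1 + c))) < 1 := by
  have hlim : Tendsto (fun M : ℕ => 2 * (M : ℝ) ^ (-c)) atTop (𝓝 0) := by
    simpa using ((tendsto_rpow_neg_atTop hc).comp tendsto_natCast_atTop_atTop).const_mul 2
  filter_upwards [hlim.eventually (gt_mem_nhds one_pos), eventually_gt_atTop 0] with M hM hM0
  have hMpos : (0 : ℝ) < M := by exact_mod_cast hM0
  rwa [neg_add, Real.rpow_add hMpos, Real.rpow_neg_one, mul_inv_cancel_left₀ hMpos.ne']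

theorem good_approximants_multiples_of_best_general (α : ℝ) :
    ∀ c > (0 : ℝ), ∃ M₀ : ℕ, ∀ M : ℕ, M₀ ≤ M → ∀ s₁ : ℕ,
      s₁ ∈ Finset.Icc 1 M →
      (∀ s ∈ Finset.Icc 1 M, s ≠ s₁ → nearestIntDist (s₁ * α) < nearestIntDist (s * α)) →
      ∀ b ∈ Finset.Icc 1 M,
        nearestIntDist (b * α) ≤ (M : ℝ) ^ (-(1 + c)) → s₁ ∣ b := by
  intro c hc
  obtain ⟨M₀, hM₀⟩ := eventually_atTop.mp (eventually_two_mul_natCast_mul_rpow_lt_one hc)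
  refine ⟨M₀, fun M hM s₁ hs₁ hbest b hb hgood => ?_⟩
  rcases eq_or_ne b s₁ with rfl | hne
  · exact dvd_rfl
  rw [Finset.mem_Icc] at hs₁ hb
  have hcop : IsCoprime (s₁ : ℤ) (round (s₁ * α)) :=
    coprime_round_of_forall_lt hs₁.1 fun t ht hts =>
      hbest t (Finset.mem_Icc.mpr ⟨ht, by omega⟩) hts.ne
  have hs₁b : nearestIntDist (s₁ * α) ≤ (M : ℝ) ^ (-(1 + c)) :=
    (hbest b (Finset.mem_Icc.mpr hb) hne).le.trans hgood
  have hcross : (b : ℤ) * round (s₁ * α) = s₁ * round (b * α) := by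
    refine natCast_mul_round_eq_of_lt_one (lt_of_le_of_lt ?_ (hM₀ M hM))
    have hs₁M : (s₁ : ℝ) ≤ M := by exact_mod_cast hs₁.2
    have hbM : (b : ℝ) ≤ M := by exact_mod_cast hb.2
    nlinarith [mul_le_mul hs₁M hgood (nearestIntDist_nonneg _) (Nat.cast_nonneg M),
      mul_le_mul hbM hs₁b (nearestIntDist_nonneg _) (Nat.cast_nonneg M)]
  exact Int.natCast_dvd_natCast.mp (hcop.dvd_of_dvd_mul_right ⟨_, hcross⟩)

/-- every very good approximant `b ≤ M` (with `‖bα‖ ≤ M^{-(1+c)}`)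
is a multiple of the best approximant `s₁`. -/
theorem good_approximants_multiples_of_best (α : ℝ) (hα : Irrational α) :
    ∀ c > (0 : ℝ), ∃ M₀ : ℕ, ∀ M : ℕ, M₀ ≤ M → ∀ s₁ : ℕ,
      s₁ ∈ Finset.Icc 1 M →
      (∀ s ∈ Finset.Icc 1 M, s ≠ s₁ → nearestIntDist (s₁ * α) < nearestIntDist (s * α)) →
      ∀ b ∈ Finset.Icc 1 M,
        nearestIntDist (b * α) ≤ (M : ℝ) ^ (-(1 + c)) → s₁ ∣ b :=
  good_approximants_multiples_of_best_general α
end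

section
/- For every $x \geq 1$, $\sum_{d \leq x,\ d \text{ squarefree},\ (d,W)=1} \mu(d)^2/\varphi(d) \gg \frac{\varphi(W)}{W} \log x$, where $W$ is a fixed positive integer and the implied constant is absolute. -/
/-!
Every `n ≥ 1` factors as `n = d * m`, where `d` is the product of the primes dividing `n` but
not `W`: `d` is squarefree, coprime to `W`, at most `n`, and every prime factor of `m` divides
`W * d`. Grouping the harmonic sum `∑_{n ≤ x} 1/n ≥ log x` by `d` and bounding the sum of `1/m`
by the Euler product `∏_{p ∣ W d} (1 - 1/p)⁻¹ = W d / φ(W d) = (W / φ W) (d / φ d)` gives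
`log x ≤ (W / φ W) ∑_d 1/φ(d)`, so the constant `c = 1` works.
-/

open Finset

namespace Nat

lemma prod_primeFactors_inv_one_sub_inv {k : ℕ} (hk : k ≠ 0) :
    ∏ p ∈ k.primeFactors, (1 - (p : ℝ)⁻¹)⁻¹ = k / φ k := by
  have h := congrArg (fun q : ℚ ↦ (q : ℝ)) (totient_eq_mul_prod_factors k)
  push_cast at h
  rw [prod_inv_distrib, h, div_mul_cancel_left₀ (cast_ne_zero.mpr hk)]

lemma sum_inv_le_prod_of_subset_factoredNumbers {s T : Finset ℕ} (hT : ↑T ⊆ factoredNumbers s) :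
    ∑ n ∈ T, (n : ℝ)⁻¹ ≤ ∏ p ∈ s with p.Prime, (1 - (p : ℝ)⁻¹)⁻¹ := by
  let f : ℕ →* ℝ := invMonoidHom.comp (Nat.castRingHom ℝ : ℕ →* ℝ)
  have hf : ∀ {p : ℕ}, p.Prime → ‖f p‖ < 1 := fun hp ↦ by
    simpa [f] using inv_lt_one_of_one_lt₀ (one_lt_cast.mpr hp.one_lt)
  have hsum := hasSum_subtype_iff_indicator.mp
    (EulerProduct.summable_and_hasSum_factoredNumbers_prod_filter_prime_geometric hf s).2
  refine (sum_congr rfl fun n hn ↦ ?_).trans_le (sum_le_hasSum T (fun n _ ↦ ?_) hsum)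
  · simp [Set.indicator_of_mem (hT hn), f]
  · exact Set.indicator_nonneg (fun n _ ↦ by simp [f]) n

lemma sum_inv_le_div_totient {k : ℕ} (hk : k ≠ 0) {T : Finset ℕ}
    (hT : ↑T ⊆ factoredNumbers k.primeFactors) :
    ∑ n ∈ T, (n : ℝ)⁻¹ ≤ k / φ k := by
  have hprimes : {p ∈ k.primeFactors | p.Prime} = k.primeFactors :=
    filter_true_of_mem fun _ ↦ prime_of_mem_primeFactors
  simpa [hprimes, prod_primeFactors_inv_one_sub_inv hk] using
    sum_inv_le_prod_of_subset_factoredNumbers hT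

lemma sum_inv_le_inv_mul_div_totient {d k : ℕ} (hd : d ≠ 0) (hk : k ≠ 0) {T : Finset ℕ}
    (hT : ∀ n ∈ T, d ∣ n ∧ n ∈ factoredNumbers k.primeFactors) :
    ∑ n ∈ T, (n : ℝ)⁻¹ ≤ (d : ℝ)⁻¹ * (k / φ k) := by
  have hd' : (d : ℝ) ≠ 0 := cast_ne_zero.mpr hd
  have hinj : Set.InjOn (· / d) T := fun a ha b hb hab ↦
    (Nat.div_left_inj (hT a ha).1 (hT b hb).1).mp hab
  calc ∑ n ∈ T, (n : ℝ)⁻¹ = (d : ℝ)⁻¹ * ∑ m ∈ T.image (· / d), (m : ℝ)⁻¹ := by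
        rw [sum_image hinj, mul_sum]
        refine sum_congr rfl fun n hn ↦ ?_
        rw [cast_div (hT n hn).1 hd', ← mul_inv, mul_div_cancel₀ _ hd']
    _ ≤ (d : ℝ)⁻¹ * (k / φ k) := by
        gcongr
        refine sum_inv_le_div_totient hk fun m hm ↦ ?_
        obtain ⟨n, hn, rfl⟩ := mem_image.mp hm
        exact mem_factoredNumbers_of_dvd (hT n hn).2 (div_dvd_of_dvd (hT n hn).1)

def coprimeRadical (W n : ℕ) : ℕ := ∏ p ∈ n.primeFactors \ W.primeFactors, p

section coprimeRadical

variable (W n : ℕ)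

lemma primeFactors_coprimeRadical :
    (coprimeRadical W n).primeFactors = n.primeFactors \ W.primeFactors :=
  primeFactors_prod fun _ hp ↦ prime_of_mem_primeFactors (mem_sdiff.mp hp).1

lemma squarefree_coprimeRadical : Squarefree (coprimeRadical W n) := by
  refine squarefree_prod_of_pairwise_isCoprime (fun p hp q hq hpq ↦ ?_)
    fun p hp ↦ (prime_of_mem_primeFactors (mem_sdiff.mp hp).1).prime.squarefree
  rw [Function.onFun, ← coprime_iff_isRelPrime]
  exact (coprime_primes (prime_of_mem_primeFactors (mem_sdiff.mp hp).1)
    (prime_of_mem_primeFactors (mem_sdiff.mp hq).1)).mpr hpq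

lemma coprimeRadical_dvd : coprimeRadical W n ∣ n :=
  (prod_dvd_prod_of_subset _ _ _ sdiff_subset).trans n.prod_primeFactors_dvd

variable {W n}

lemma coprime_coprimeRadical (hW : W ≠ 0) : Coprime (coprimeRadical W n) W := by
  rw [← disjoint_primeFactors (squarefree_coprimeRadical W n).ne_zero hW,
    primeFactors_coprimeRadical]
  exact sdiff_disjoint

lemma mem_factoredNumbers_mul_coprimeRadical (hW : W ≠ 0) (hn : n ≠ 0) :
    n ∈ factoredNumbers (W * coprimeRadical W n).primeFactors := by
  refine mem_factoredNumbers_of_primeFactors_subset hn ?_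
  rw [primeFactors_mul hW (squarefree_coprimeRadical W n).ne_zero, primeFactors_coprimeRadical,
    union_sdiff_self_eq_union]
  exact subset_union_right

end coprimeRadical

theorem sum_Icc_inv_le_mul_sum_inv_totient {W : ℕ} (hW : W ≠ 0) (N : ℕ) :
    ∑ n ∈ Icc 1 N, (n : ℝ)⁻¹ ≤ W / φ W *
      ∑ d ∈ Icc 1 N with Squarefree d ∧ Coprime d W, (1 : ℝ) / φ d := by
  have hmaps : ∀ n ∈ Icc 1 N,
      coprimeRadical W n ∈ {d ∈ Icc 1 N | Squarefree d ∧ Coprime d W} := by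
    intro n hn
    obtain ⟨hn1, hnN⟩ := mem_Icc.mp hn
    have hsq := squarefree_coprimeRadical W n
    have hle := le_of_dvd hn1 (coprimeRadical_dvd W n)
    simp only [mem_filter, mem_Icc]
    exact ⟨⟨pos_of_ne_zero hsq.ne_zero, hle.trans hnN⟩, hsq, coprime_coprimeRadical hW⟩
  rw [← sum_fiberwise_of_maps_to hmaps, mul_sum]
  refine sum_le_sum fun d hd ↦ ?_
  obtain ⟨-, hdsq, hdW⟩ := mem_filter.mp hd
  have hd0 := hdsq.ne_zero
  refine (sum_inv_le_inv_mul_div_totient hd0 (mul_ne_zero hW hd0) fun n hn ↦ ?_).trans_eq ?_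
  · obtain ⟨hnN, rfl⟩ := mem_filter.mp hn
    exact ⟨coprimeRadical_dvd W n,
      mem_factoredNumbers_mul_coprimeRadical hW (one_le_iff_ne_zero.mp (mem_Icc.mp hnN).1)⟩
  · have hφW := (totient_pos.mpr (pos_of_ne_zero hW)).ne'
    have hφd := (totient_pos.mpr (pos_of_ne_zero hd0)).ne'
    rw [totient_mul hdW.symm]
    push_cast
    field_simp

end Nat

/-- lower bound `∑_{d ≤ x, squarefree, (d,W)=1} μ(d)²/φ(d) ≫ (φ(W)/W) log x`. -/
theorem squarefree_coprime_totient_sum_lower :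
    ∃ c : ℝ, 0 < c ∧ ∀ W : ℕ, 1 ≤ W → ∀ x : ℝ, 1 ≤ x →
      (∑ d ∈ (Finset.Icc 1 ⌊x⌋₊).filter (fun d => Squarefree d ∧ Nat.Coprime d W),
          (1 : ℝ) / (Nat.totient d : ℝ))
        ≥ c * ((Nat.totient W : ℝ) / (W : ℝ)) * Real.log x := by
  refine ⟨1, one_pos, fun W hW x hx ↦ ?_⟩
  rw [ge_iff_le]
  set S := ∑ d ∈ Icc 1 ⌊x⌋₊ with Squarefree d ∧ Nat.Coprime d W, (1 : ℝ) / Nat.totient d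
  have hlog : Real.log x ≤ ∑ n ∈ Icc 1 ⌊x⌋₊, (n : ℝ)⁻¹ := by
    simpa [harmonic_eq_sum_Icc] using log_le_harmonic_floor x (by linarith)
  have hφW : (0 : ℝ) < Nat.totient W := by exact_mod_cast Nat.totient_pos.mpr hW
  have hW' : (0 : ℝ) < W := by exact_mod_cast hW
  calc 1 * (Nat.totient W / W : ℝ) * Real.log x
      ≤ Nat.totient W / W * (W / Nat.totient W * S) := by
        rw [one_mul]
        gcongr
        exact hlog.trans (Nat.sum_Icc_inv_le_mul_sum_inv_totient (Nat.one_le_iff_ne_zero.mp hW) _)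
    _ = S := by field_simp
end
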